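/- arXiv:0708.1178 — 4 statements merged into one kernel-verified Lean document; each statement's English description precedes it below -/
import Mathlib

section
/- A doubly degenerate bicategory determines a commutative monoid equipped with a distinguished invertible element: the 2-cells form a commutative monoid X under composition, and the (coinciding) unitors λ = ρ give an invertible element d ∈ X; conversely each such pair (X, d) arises from a doubly degenerate bicategory. -/
open CategoryTheory Bicategory

/-- A doubly degenerate bicategory: a bicategory with exactly one 0-cell and
exactly one 1-cell. -/
structure DoublyDegenerateBicat where
  B : Type
  [bicat : Bicategory.{0, 0} B]
  [uniqueObj : Unique B]
  [uniqueHom : ∀ a b : B, Unique (a ⟶ b)]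

attribute [instance] DoublyDegenerateBicat.bicat DoublyDegenerateBicat.uniqueObj
  DoublyDegenerateBicat.uniqueHom

/-- The distinguished element of the monoid of 2-cells of a doubly degenerate
bicategory, arising from the (coinciding) unitors. -/
def DoublyDegenerateBicat.distinguished (D : DoublyDegenerateBicat) (a : D.B) :
    End (𝟙 a) :=
  eqToHom (Subsingleton.elim (𝟙 a) (𝟙 a ≫ 𝟙 a)) ≫ (λ_ (𝟙 a)).hom

/-! ### Auxiliary: Eckmann–Hilton style commutativity -/

theorem dd_comm (D : DoublyDegenerateBicat) (a : D.B) (α β : 𝟙 a ⟶ 𝟙 a) :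
    α ≫ β = β ≫ α := by
  have key : ∀ x y : 𝟙 a ⟶ 𝟙 a,
      ((ρ_ (𝟙 a)).hom ≫ x ≫ (ρ_ (𝟙 a)).inv) ≫ ((λ_ (𝟙 a)).hom ≫ y ≫ (λ_ (𝟙 a)).inv)
        = ((λ_ (𝟙 a)).hom ≫ y ≫ (λ_ (𝟙 a)).inv) ≫ ((ρ_ (𝟙 a)).hom ≫ x ≫ (ρ_ (𝟙 a)).inv) := by
    intro x y
    have h := whisker_exchange (f := 𝟙 a) (g := 𝟙 a) (h := 𝟙 a) (i := 𝟙 a) x y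
    rw [Bicategory.id_whiskerLeft, Bicategory.whiskerRight_id] at h
    simpa using h.symm
  have h := key ((ρ_ (𝟙 a)).inv ≫ (λ_ (𝟙 a)).hom ≫ α ≫ (λ_ (𝟙 a)).inv ≫ (ρ_ (𝟙 a)).hom) β
  simp only [Category.assoc, Iso.hom_inv_id, Iso.hom_inv_id_assoc, Iso.inv_hom_id,
    Iso.inv_hom_id_assoc, Category.comp_id, Category.id_comp] at h
  have h2 := congrArg (fun t => (λ_ (𝟙 a)).inv ≫ t ≫ (λ_ (𝟙 a)).hom) h
  simpa using h2

/-! ### Auxiliary: the bicategory built from a commutative monoid -/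

structure MOb (X : Type) : Type where

structure MHom (X : Type) : Type where

instance (X : Type) : Unique (MOb X) := ⟨⟨⟨⟩⟩, fun _ => rfl⟩
instance (X : Type) : Unique (MHom X) := ⟨⟨⟨⟩⟩, fun _ => rfl⟩

instance MOb.catStruct (X : Type) : CategoryStruct (MOb X) where
  Hom _ _ := MHom X
  id _ := ⟨⟩
  comp _ _ := ⟨⟩

instance MHom.quiver (X : Type) [CommMonoid X] : Quiver (MHom X) := ⟨fun _ _ => X⟩

instance MHom.cat (X : Type) [CommMonoid X] : Category (MHom X) where
  id _ := (1 : X)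
  comp x y := x * y
  id_comp := one_mul
  comp_id := mul_one
  assoc := mul_assoc

instance MOb.homCat (X : Type) [CommMonoid X] (a b : MOb X) : Category (a ⟶ b) :=
  MHom.cat X

instance MOb.homUnique (X : Type) [CommMonoid X] (a b : MOb X) : Unique (a ⟶ b) :=
  inferInstanceAs (Unique (MHom X))

def mBicat (X : Type) [CommMonoid X] (d : Xˣ) : Bicategory (MOb X) where
  toCategoryStruct := inferInstance
  homCategory a b := MOb.homCat X a b
  whiskerLeft := fun {_ _ _} _ {_ _} η => η
  whiskerRight := fun {_ _ _ _ _} η _ => η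
  associator _ _ _ := ⟨(1 : X), (1 : X), one_mul 1, one_mul 1⟩
  leftUnitor _ := ⟨(d : X), ((d⁻¹ : Xˣ) : X), d.mul_inv, d.inv_mul⟩
  rightUnitor _ := ⟨(d : X), ((d⁻¹ : Xˣ) : X), d.mul_inv, d.inv_mul⟩
  whiskerLeft_id := fun _ _ => rfl
  whiskerLeft_comp := fun {_ _ _} _ {_ _ _} _ _ => rfl
  id_whiskerLeft := fun {_ _ _ _} η => by
    show (η : X) = (d : X) * ((η : X) * ((d⁻¹ : Xˣ) : X))
    rw [mul_comm (η : X), Units.mul_inv_cancel_left]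
  comp_whiskerLeft := fun {_ _ _ _} _ _ {_ _} η => by
    show (η : X) = (1 : X) * ((η : X) * (1 : X))
    simp
  id_whiskerRight := fun _ _ => rfl
  comp_whiskerRight := fun {_ _ _ _ _ _} _ _ _ => rfl
  whiskerRight_id := fun {_ _ _ _} η => by
    show (η : X) = (d : X) * ((η : X) * ((d⁻¹ : Xˣ) : X))
    rw [mul_comm (η : X), Units.mul_inv_cancel_left]
  whiskerRight_comp := fun {_ _ _ _ _ _} η _ _ => by
    show (η : X) = (1 : X) * ((η : X) * (1 : X))
    simp
  whisker_assoc := fun {_ _ _ _} _ {_ _} η _ => by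
    show (η : X) = (1 : X) * ((η : X) * (1 : X))
    simp
  whisker_exchange := fun {_ _ _ _ _ _ _} η θ => mul_comm (θ : X) (η : X)
  pentagon := fun _ _ _ _ => by
    show (1 : X) * ((1 : X) * (1 : X)) = (1 : X) * (1 : X)
    simp
  triangle := fun _ _ => by
    show (1 : X) * (d : X) = (d : X)
    simp

def mDD (X : Type) [CommMonoid X] (d : Xˣ) : DoublyDegenerateBicat where
  B := MOb X
  bicat := mBicat X d
  uniqueHom a b := MOb.homUnique X a b

/-- A doubly degenerate bicategory determines a commutative monoid (its 2-cells
under composition) with a distinguished invertible element (coming from the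
unitors); conversely every commutative monoid with a distinguished invertible
element arises this way. -/
theorem stmt9 :
    (∀ (D : DoublyDegenerateBicat) (a : D.B),
      (∀ α β : End (𝟙 a), α * β = β * α) ∧ IsUnit (D.distinguished a)) ∧
    (∀ (X : Type) [CommMonoid X] (d : Xˣ),
      ∃ (D : DoublyDegenerateBicat) (a : D.B) (e : End (𝟙 a) ≃* X),
        e (D.distinguished a) = d) := by
  constructor
  · intro D a
    constructor
    · intro α β
      exact (dd_comm D a α β).symm
    · refine ⟨⟨D.distinguished a,
        (λ_ (𝟙 a)).inv ≫ eqToHom (Subsingleton.elim (𝟙 a ≫ 𝟙 a) (𝟙 a)), ?_, ?_⟩, rfl⟩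
      · show ((λ_ (𝟙 a)).inv ≫ eqToHom _) ≫ D.distinguished a = 𝟙 (𝟙 a)
        simp [DoublyDegenerateBicat.distinguished]
      · show D.distinguished a ≫ ((λ_ (𝟙 a)).inv ≫ eqToHom _) = 𝟙 (𝟙 a)
        simp [DoublyDegenerateBicat.distinguished]
  · intro X _ d
    refine ⟨mDD X d, default, ?_, ?_⟩
    · exact
        { toFun := fun x => (x : X)
          invFun := fun x => (x : End (𝟙 (default : MOb X)))
          left_inv := fun _ => rfl
          right_inv := fun _ => rfl
          map_mul' := fun x y => by
            exact mul_comm (G := X) y x }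
    · show (1 : X) * (d : X) = (d : X)
      simp
end

section
/- Composition of weak functors between doubly degenerate bicategories is given by (G, m_G) ∘ (F, m_F) = (G∘F, G(m_F) · m_G), and this composition is strictly associative and unital. -/
/-- Composition of weak functors between doubly degenerate bicategories, given on
pairs by `(G, m_G) ∘ (F, m_F) = (G ∘ F, G(m_F) · m_G)`, is strictly associative
and strictly unital. -/
theorem stmt12 {X Y Z W : Type*} [CommMonoid X] [CommMonoid Y] [CommMonoid Z]
    [CommMonoid W] (F : X →* Y) (G : Y →* Z) (H : Z →* W)
    (mF : Yˣ) (mG : Zˣ) (mH : Wˣ) :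
    -- associativity of the composite pairs
    ((H.comp G).comp F = H.comp (G.comp F) ∧
      Units.map (H.comp G) mF * (Units.map H mG * mH) =
        Units.map H (Units.map G mF * mG) * mH) ∧
    -- left and right unit laws with respect to the identity `(id, 1)`
    ((MonoidHom.id Y).comp F = F ∧ Units.map (MonoidHom.id Y) mF * 1 = mF) ∧
    (F.comp (MonoidHom.id X) = F ∧ Units.map F (1 : Xˣ) * mF = mF) := by
  refine ⟨⟨rfl, ?_⟩, ⟨rfl, ?_⟩, rfl, ?_⟩ <;> ext <;> simp [mul_assoc]
end

section
/- A weak transformation between weak functors (F, m_F), (G, m_G) of doubly degenerate bicategories exists if and only if F = G as monoid homomorphisms, and in that case it is unique, with invertible component σ determined by σ · m_F = m_G. -/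
/-- A weak transformation between weak functors `(F, m_F), (G, m_G)` of doubly
degenerate bicategories (an invertible `σ` satisfying naturality and the
associator axiom) exists if and only if `F = G`; and it is unique, its component
being determined by `σ · m_F = m_G`. -/
theorem stmt13 {X Y : Type*} [CommMonoid X] [CommMonoid Y]
    (F G : X →* Y) (mF mG : Yˣ) :
    ((∃ σ : Yˣ, (∀ α : X, F α * (σ : Y) = (σ : Y) * G α) ∧ σ * σ * mF = σ * mG) ↔
      F = G) ∧
    (∀ σ : Yˣ, ((∀ α : X, F α * (σ : Y) = (σ : Y) * G α) ∧ σ * σ * mF = σ * mG) →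
      σ * mF = mG) := by
  constructor
  · constructor
    · rintro ⟨σ, hnat, _⟩
      ext α
      have := hnat α
      rw [mul_comm (σ : Y) (G α)] at this
      exact σ.isUnit.mul_right_cancel this
    · intro h
      refine ⟨mG * mF⁻¹, fun α => by rw [h]; exact mul_comm _ _, ?_⟩
      group
  · rintro σ ⟨_, hax⟩
    have : σ * (σ * mF) = σ * mG := by rw [← mul_assoc]; exact hax
    exact mul_left_cancel this
end

section
/- Every lax transformation between weak functors of doubly degenerate bicategories is automatically weak: the transformation axioms force the component σ ∈ Y to be invertible. -/
/-- Every lax transformation between weak functors of doubly degenerate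
bicategories is automatically weak: the transformation axioms force the component
`σ` to be invertible. -/
theorem stmt14 {X Y : Type*} [CommMonoid X] [CommMonoid Y]
    (F G : X →* Y) (mF mG : Yˣ) (dX : Xˣ) (σ : Y)
    (nat : ∀ α : X, F α * σ = σ * G α)
    (assoc : σ * σ * (mF : Y) = σ * (mG : Y))
    (unit : σ * (mF : Y) * F dX = (mG : Y) * G dX) :
    IsUnit σ := by
  have h : IsUnit (σ * (mF : Y) * F dX) := by
    rw [unit]
    exact mG.isUnit.mul (dX.isUnit.map G)
  exact (IsUnit.mul_iff.mp (IsUnit.mul_iff.mp h).1).1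
end
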